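/- arXiv:1604.07449 — 4 statements merged into one kernel-verified Lean document; each statement's English description precedes it below -/
import Mathlib

section
/- Let x = (x_ij) be an M×N real matrix such that every row sums to 0 and every entry satisfies x_ij ≤ b₀ for a constant b₀ > 0. Set σ_i² = (1/N)Σ_{j∈[N]} x_ij² and σ² = max_{i∈[M]} σ_i². Fix I ⊂ [M] with |I| = m and 1 ≤ n ≤ N, and let (A_i)_{i∈I} be independent random variables where A_i = Σ_{j∈S_i} x_ij with S_i a uniformly random subset of [N] of size n. Then for every t > 0, P(Σ_{i∈I} A_i ≥ t) ≤ exp(−t²/(2mnσ² + (2/3)b₀t)). -/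
/-!
Chernoff's method: the number of tuples `(S_i)` with `∑_{i ∈ I} ∑_{j ∈ S_i} x i j ≥ t` is at most
`e^{-λt}` times the sum of `e^{λ ∑_i ∑_{j ∈ S_i} x i j}` over all tuples, and this sum factorizes
over the rows. For one row, `∑_{|S| = n} ∏_{j ∈ S} e^{λ x_j}` is an elementary symmetric
polynomial of the positive numbers `e^{λ x_j}`, so Maclaurin's inequality bounds it by
`C(N, n)` times the `n`-th power of their mean. Since the row sums to zero and `λ x_j ≤ λ b₀ < 3`,
Bernstein's bound `e^y ≤ 1 + y + y² / (2 (1 - λ b₀ / 3))` bounds that mean by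
`exp (λ² σ² / (2 (1 - λ b₀ / 3)))`, and the usual choice of `λ` gives the stated exponent.
-/

open Finset
open scoped Nat

theorem choose_succ_mul_pow_add_le {N k : ℕ} {u μ c : ℝ} (hu : 0 ≤ u) (hμ : 0 ≤ u + μ)
    (hmean : (N + 1) * μ = N * u + c) :
    N.choose (k + 1) * u ^ (k + 1) + c * (N.choose k * u ^ k)
      ≤ (N + 1).choose (k + 1) * μ ^ (k + 1) := by
  have htangent : u ^ (k + 1) + (k + 1) * u ^ k * (μ - u) ≤ μ ^ (k + 1) := by
    simpa using pow_add_mul_le_add_pow hu (by linarith : 0 ≤ 2 * u + (μ - u)) (k + 1)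
  have hpascal : ((N + 1).choose (k + 1) : ℝ) = N.choose k + N.choose (k + 1) := by
    exact_mod_cast Nat.choose_succ_succ' N k
  have habsorb : ((N : ℝ) + 1) * N.choose k = (N + 1).choose (k + 1) * (k + 1) := by
    exact_mod_cast Nat.add_one_mul_choose_eq N k
  calc N.choose (k + 1) * u ^ (k + 1) + c * (N.choose k * u ^ k)
      = (N + 1).choose (k + 1) * (u ^ (k + 1) + (k + 1) * u ^ k * (μ - u)) := by
        linear_combination -(N.choose k * u ^ k) * hmean + u ^ k * (μ - u) * habsorb
          - u ^ (k + 1) * hpascal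
    _ ≤ (N + 1).choose (k + 1) * μ ^ (k + 1) := by gcongr

theorem Multiset.esymm_cons_succ {R : Type*} [CommSemiring R] (a : R) (s : Multiset R) (k : ℕ) :
    (a ::ₘ s).esymm (k + 1) = s.esymm (k + 1) + a * s.esymm k := by
  simp [Multiset.esymm, Multiset.map_map, Multiset.sum_map_mul_left]

/-- Maclaurin's inequality. -/
theorem Multiset.esymm_le_choose_mul_mean_pow (s : Multiset ℝ) (hs : ∀ a ∈ s, 0 ≤ a) (n : ℕ) :
    s.esymm n ≤ (Multiset.card s).choose n * (s.sum / Multiset.card s) ^ n := by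
  induction s using Multiset.induction_on generalizing n with
  | empty => cases n <;> simp [Multiset.esymm, Multiset.powersetCard_zero_right]
  | cons a s ih =>
    cases n with
    | zero => simp [Multiset.esymm]
    | succ k =>
      have ha : 0 ≤ a := hs a (Multiset.mem_cons_self a s)
      have hs' : ∀ b ∈ s, 0 ≤ b := fun b hb => hs b (Multiset.mem_cons_of_mem hb)
      have hsum : 0 ≤ s.sum := Multiset.sum_nonneg hs'
      have hmean : ((Multiset.card s : ℝ) + 1) * ((a + s.sum) / (Multiset.card s + 1))
          = Multiset.card s * (s.sum / Multiset.card s) + a := by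
        rcases eq_or_ne (Multiset.card s) 0 with h | h
        · simp [Multiset.card_eq_zero.1 h]
        · field_simp
          ring
      rw [Multiset.esymm_cons_succ, Multiset.card_cons, Multiset.sum_cons]
      push_cast
      calc s.esymm (k + 1) + a * s.esymm k
          ≤ (Multiset.card s).choose (k + 1) * (s.sum / Multiset.card s) ^ (k + 1)
            + a * ((Multiset.card s).choose k * (s.sum / Multiset.card s) ^ k) := by
            gcongr
            exacts [ih hs' (k + 1), ih hs' k]
        _ ≤ _ := choose_succ_mul_pow_add_le (by positivity) (by positivity) hmean

theorem Real.exp_le_one_add_add_sq_div_two_of_nonpos {y : ℝ} (hy : y ≤ 0) :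
    Real.exp y ≤ 1 + y + y ^ 2 / 2 := by
  have hneg := Real.quadratic_le_exp_of_nonneg (neg_nonneg.2 hy)
  have hpos : 0 < 1 - y + y ^ 2 / 2 := by nlinarith
  have hprod : Real.exp y * Real.exp (-y) = 1 := by
    rw [← Real.exp_add, add_neg_cancel, Real.exp_zero]
  -- `(1 + y + y² / 2) (1 - y + y² / 2) = 1 + y⁴ / 4 ≥ 1 = e^y e^{-y}`
  refine le_of_mul_le_mul_right ?_ hpos
  nlinarith [Real.exp_pos y, sq_nonneg (y ^ 2)]

theorem Nat.two_mul_three_pow_le_factorial (k : ℕ) : 2 * 3 ^ k ≤ (k + 2)! := by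
  induction k with
  | zero => decide
  | succ k ih =>
    rw [Nat.factorial_succ, pow_succ]
    nlinarith

theorem Real.exp_sub_one_sub_le_of_nonneg {c y : ℝ} (hy : 0 ≤ y) (hyc : y ≤ c) (hc : c < 3) :
    Real.exp y - 1 - y ≤ y ^ 2 / 2 * (1 - c / 3)⁻¹ := by
  have hexp : HasSum (fun k => y ^ k / k !) (Real.exp y) :=
    Real.exp_eq_exp_ℝ ▸ NormedSpace.expSeries_div_hasSum_exp y
  have htail : HasSum (fun k => y ^ (k + 2) / (k + 2)!) (Real.exp y - 1 - y) := by
    simpa [Finset.sum_range_succ, sub_sub] using (hasSum_nat_add_iff' 2).2 hexp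
  have hgeom : HasSum (fun k => y ^ 2 / 2 * (c / 3) ^ k) (y ^ 2 / 2 * (1 - c / 3)⁻¹) :=
    (hasSum_geometric_of_lt_one (by linarith) (by linarith)).mul_left _
  refine hasSum_le (fun k => ?_) htail hgeom
  have hfact : (2 * 3 ^ k : ℝ) ≤ (k + 2)! := by
    exact_mod_cast Nat.two_mul_three_pow_le_factorial k
  calc y ^ (k + 2) / (k + 2)! ≤ y ^ (k + 2) / (2 * 3 ^ k) := by gcongr
    _ = y ^ 2 / 2 * (y / 3) ^ k := by rw [div_pow]; ring
    _ ≤ y ^ 2 / 2 * (c / 3) ^ k := by gcongr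

theorem Real.exp_sub_one_sub_le_of_le {c y : ℝ} (hc0 : 0 ≤ c) (hc3 : c < 3) (hy : y ≤ c) :
    Real.exp y - 1 - y ≤ y ^ 2 / (2 * (1 - c / 3)) := by
  rw [div_mul_eq_div_div, div_eq_mul_inv (y ^ 2 / 2)]
  rcases le_total y 0 with hy0 | hy0
  · have h1 : 1 ≤ (1 - c / 3)⁻¹ := one_le_inv₀ (by linarith) |>.2 (by linarith)
    nlinarith [Real.exp_le_one_add_add_sq_div_two_of_nonpos hy0, sq_nonneg y]
  · exact Real.exp_sub_one_sub_le_of_nonneg hy0 hy hc3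

section RowBound

variable {ι : Type*} [Fintype ι] (a : ι → ℝ) (ha : ∑ j, a j = 0) {b l v : ℝ} (hb : 0 ≤ b)
  (hab : ∀ j, a j ≤ b) (hl : 0 ≤ l) (hlb : l * b < 3)
  (hv : (∑ j, a j ^ 2) / Fintype.card ι ≤ v)
include ha hb hab hl hlb hv

theorem Real.sum_exp_mul_div_card_le :
    (∑ j, Real.exp (l * a j)) / Fintype.card ι
      ≤ Real.exp (l ^ 2 * v / (2 * (1 - l * b / 3))) := by
  set K := 2 * (1 - l * b / 3)
  have hK : 0 < K := by simp only [K]; linarith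
  have hterm : ∀ j, Real.exp (l * a j) ≤ 1 + l * a j + l ^ 2 / K * a j ^ 2 := fun j => by
    have := Real.exp_sub_one_sub_le_of_le (mul_nonneg hl hb) hlb
      (mul_le_mul_of_nonneg_left (hab j) hl)
    rw [mul_pow, mul_div_right_comm] at this
    linarith
  have hsum : ∑ j, Real.exp (l * a j) ≤ Fintype.card ι + l ^ 2 / K * ∑ j, a j ^ 2 := by
    calc ∑ j, Real.exp (l * a j) ≤ ∑ j, (1 + l * a j + l ^ 2 / K * a j ^ 2) :=
          sum_le_sum fun j _ => hterm j
      _ = Fintype.card ι + l ^ 2 / K * ∑ j, a j ^ 2 := by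
        simp only [sum_add_distrib, ← mul_sum, ha, sum_const, card_univ, nsmul_eq_mul]
        ring
  calc (∑ j, Real.exp (l * a j)) / Fintype.card ι
      ≤ (Fintype.card ι + l ^ 2 / K * ∑ j, a j ^ 2) / Fintype.card ι := by gcongr
    _ = Fintype.card ι / Fintype.card ι
          + l ^ 2 / K * ((∑ j, a j ^ 2) / Fintype.card ι) := by ring
    _ ≤ 1 + l ^ 2 / K * v := by gcongr; exact div_self_le_one _
    _ ≤ Real.exp (l ^ 2 * v / K) := by
        rw [mul_div_right_comm]
        linarith [Real.add_one_le_exp (l ^ 2 / K * v)]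

theorem Real.sum_powersetCard_exp_mul_sum_le [DecidableEq ι] (n : ℕ) :
    ∑ s ∈ powersetCard n univ, Real.exp (l * ∑ j ∈ s, a j)
      ≤ (Fintype.card ι).choose n * Real.exp (n * (l ^ 2 * v / (2 * (1 - l * b / 3)))) := by
  have hesymm : ∑ s ∈ powersetCard n univ, Real.exp (l * ∑ j ∈ s, a j)
      = (univ.val.map fun j => Real.exp (l * a j)).esymm n := by
    simp only [Finset.esymm_map_val, mul_sum, Real.exp_sum]
  have hmaclaurin := Multiset.esymm_le_choose_mul_mean_pow
    (univ.val.map fun j => Real.exp (l * a j)) (by simp [Real.exp_nonneg]) n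
  simp only [Multiset.card_map, card_val, card_univ] at hmaclaurin
  rw [hesymm, Real.exp_nat_mul]
  refine hmaclaurin.trans (mul_le_mul_of_nonneg_left ?_ (Nat.cast_nonneg _))
  exact pow_le_pow_left₀ (by positivity) (Real.sum_exp_mul_div_card_le a ha hb hab hl hlb hv) n

end RowBound

theorem Finset.card_filter_le_exp_mul_sum_exp {γ : Type*} (F : Finset γ) (Z : γ → ℝ) {t l : ℝ}
    (hl : 0 ≤ l) :
    (#{f ∈ F | t ≤ Z f} : ℝ) ≤ Real.exp (-(l * t)) * ∑ f ∈ F, Real.exp (l * Z f) := by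
  rw [mul_sum, card_eq_sum_ones, Nat.cast_sum, Nat.cast_one]
  calc ∑ f ∈ F with t ≤ Z f, (1 : ℝ)
      ≤ ∑ f ∈ F with t ≤ Z f, Real.exp (-(l * t)) * Real.exp (l * Z f) := by
        refine sum_le_sum fun f hf => ?_
        rw [← Real.exp_add]
        exact Real.one_le_exp (by nlinarith [(mem_filter.1 hf).2])
    _ ≤ ∑ f ∈ F, Real.exp (-(l * t)) * Real.exp (l * Z f) :=
        sum_le_sum_of_subset_of_nonneg (filter_subset _ _) fun _ _ _ => by positivity

theorem Fintype.sum_piFinset_exp_sum_le {ι β : Type*} [Fintype ι] [DecidableEq ι]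
    (A : ι → Finset β) (I : Finset ι) (Y : ι → β → ℝ) {w : ℝ}
    (hY : ∀ i ∈ I, ∑ s ∈ A i, Real.exp (Y i s) ≤ #(A i) * Real.exp w) :
    ∑ f ∈ Fintype.piFinset A, Real.exp (∑ i ∈ I, Y i (f i))
      ≤ (∏ i, (#(A i) : ℝ)) * Real.exp (#I * w) := by
  have hrestrict : ∀ g : ι → ℝ, ∑ i ∈ I, g i = ∑ i, if i ∈ I then g i else 0 := fun g => by
    rw [sum_ite_mem]
  calc ∑ f ∈ Fintype.piFinset A, Real.exp (∑ i ∈ I, Y i (f i))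
      = ∏ i, ∑ s ∈ A i, Real.exp (if i ∈ I then Y i s else 0) := by
        simp only [prod_univ_sum, hrestrict, Real.exp_sum]
    _ ≤ ∏ i, ((#(A i) : ℝ) * Real.exp (if i ∈ I then w else 0)) := by
        refine prod_le_prod (fun i _ => by positivity) fun i _ => ?_
        by_cases hi : i ∈ I
        · simpa [hi] using hY i hi
        · simp [hi]
    _ = (∏ i, (#(A i) : ℝ)) * Real.exp (#I * w) := by
        rw [prod_mul_distrib, ← Real.exp_sum, ← hrestrict, sum_const, nsmul_eq_mul]

theorem exists_bernstein_exponent {P b t : ℝ} (hP : 0 ≤ P) (hb : 0 < b) (ht : 0 < t) :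
    ∃ l, 0 ≤ l ∧ l * b < 3 ∧
      -(l * t) + l ^ 2 * P / (2 * (1 - l * b / 3)) = -(t ^ 2) / (2 * P + 2 / 3 * b * t) := by
  rcases hP.eq_or_lt with rfl | hP
  -- for `P = 0` the usual choice `t / (P + b t / 3)` would give `l * b = 3`
  · refine ⟨3 / (2 * b), by positivity, by field_simp; norm_num, ?_⟩
    field_simp
    ring
  · have hD : 0 < P + b * t / 3 := by positivity
    refine ⟨t / (P + b * t / 3), by positivity, ?_, ?_⟩
    · rw [div_mul_eq_mul_div, div_lt_iff₀ hD]
      linarith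
    · have : 1 - t / (P + b * t / 3) * b / 3 = P / (P + b * t / 3) := by
        field_simp
        ring
      rw [this]
      field_simp
      ring

/-- The probability is computed by counting the tuples `(S_i)_i`, encoded as functions `f` with
all `(f i).card = n`, among `C(N, n)^M` equally likely ones. -/
theorem bernstein_without_replacement_general (M N m n : ℕ)
    (x : Fin M → Fin N → ℝ) (b0 : ℝ) (hb0 : 0 < b0)
    (hrow : ∀ i, ∑ j, x i j = 0) (hbd : ∀ i j, x i j ≤ b0)
    (I : Finset (Fin M)) (hI : I.card = m) (t : ℝ) (ht : 0 < t) :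
    ({f : Fin M → Finset (Fin N) |
        (∀ i, (f i).card = n) ∧ t ≤ ∑ i ∈ I, ∑ j ∈ f i, x i j}.ncard : ℝ) /
        ((Nat.choose N n : ℝ) ^ M)
      ≤ Real.exp (-(t ^ 2) /
          (2 * (m : ℝ) * (n : ℝ) * (⨆ i : Fin M, (∑ j, x i j ^ 2) / (N : ℝ))
            + (2 / 3) * b0 * t)) := by
  classical
  set σ2 := ⨆ i : Fin M, (∑ j, x i j ^ 2) / (N : ℝ)
  have hσ2 : ∀ i, (∑ j, x i j ^ 2) / (N : ℝ) ≤ σ2 := le_ciSup (Set.finite_range _).bddAbove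
  have hσ2_nonneg : 0 ≤ σ2 := Real.iSup_nonneg fun i => by positivity
  obtain ⟨l, hl, hlb, hexponent⟩ :=
    exists_bernstein_exponent (P := m * n * σ2) (by positivity) hb0 ht
  set A : Fin M → Finset (Finset (Fin N)) := fun _ => powersetCard n univ
  set w := n * (l ^ 2 * σ2 / (2 * (1 - l * b0 / 3)))
  have hcount : {f : Fin M → Finset (Fin N) |
      (∀ i, (f i).card = n) ∧ t ≤ ∑ i ∈ I, ∑ j ∈ f i, x i j}.ncard
      = #{f ∈ Fintype.piFinset A | t ≤ ∑ i ∈ I, ∑ j ∈ f i, x i j} := by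
    rw [← Set.ncard_coe_finset]
    congr 1
    ext f
    simp [A, Fintype.mem_piFinset]
  have hrows : ∀ i ∈ I, ∑ s ∈ A i, Real.exp (l * ∑ j ∈ s, x i j) ≤ #(A i) * Real.exp w :=
    fun i _ => by
      simpa [A, w] using Real.sum_powersetCard_exp_mul_sum_le (x i) (hrow i) hb0.le (hbd i) hl
        hlb (by simpa using hσ2 i) n
  rw [hcount]
  refine div_le_of_le_mul₀ (by positivity) (by positivity) ?_
  calc (#{f ∈ Fintype.piFinset A | t ≤ ∑ i ∈ I, ∑ j ∈ f i, x i j} : ℝ)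
      ≤ Real.exp (-(l * t)) *
          ∑ f ∈ Fintype.piFinset A, Real.exp (l * ∑ i ∈ I, ∑ j ∈ f i, x i j) :=
        card_filter_le_exp_mul_sum_exp _ _ hl
    _ = Real.exp (-(l * t)) *
          ∑ f ∈ Fintype.piFinset A, Real.exp (∑ i ∈ I, l * ∑ j ∈ f i, x i j) := by
        simp_rw [mul_sum]
    _ ≤ Real.exp (-(l * t)) * ((∏ i, (#(A i) : ℝ)) * Real.exp (#I * w)) := by
        gcongr
        exact Fintype.sum_piFinset_exp_sum_le A I _ hrows
    _ = Real.exp (-(l * t) + l ^ 2 * (m * n * σ2) / (2 * (1 - l * b0 / 3)))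
          * (N.choose n) ^ M := by
        simp only [A, w, card_powersetCard, card_univ, Fintype.card_fin, prod_const, hI]
        rw [Real.exp_add]
        ring_nf
    _ = _ := by
        rw [hexponent]
        ring_nf

/-- Bernstein-type tail bound for sums of independent without-replacement row samples.
For each row `i`, `S_i` is a uniformly random size-`n` subset of `[N]`, independently
across rows; the probability that `∑_{i ∈ I} ∑_{j ∈ S_i} x i j ≥ t` is expressed by
counting the tuples `(S_i)_i` (encoded as functions `f` with all `(f i).card = n`,
uniform among `C(N,n)^M` possibilities). -/
theorem bernstein_without_replacement (M N m n : ℕ) (hM : 0 < M)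
    (hn : 1 ≤ n) (hnN : n ≤ N)
    (x : Fin M → Fin N → ℝ) (b0 : ℝ) (hb0 : 0 < b0)
    (hrow : ∀ i, ∑ j, x i j = 0) (hbd : ∀ i j, x i j ≤ b0)
    (I : Finset (Fin M)) (hI : I.card = m) (t : ℝ) (ht : 0 < t) :
    ({f : Fin M → Finset (Fin N) |
        (∀ i, (f i).card = n) ∧ t ≤ ∑ i ∈ I, ∑ j ∈ f i, x i j}.ncard : ℝ) /
        ((Nat.choose N n : ℝ) ^ M)
      ≤ Real.exp (-(t ^ 2) /
          (2 * (m : ℝ) * (n : ℝ) * (⨆ i : Fin M, (∑ j, x i j ^ 2) / (N : ℝ))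
            + (2 / 3) * b0 * t)) :=
  bernstein_without_replacement_general M N m n x b0 hb0 hrow hbd I hI t ht
end

section
/- Let x = (x_ij) be an M×N real matrix such that every row sums to 0 and every entry satisfies x_ij ≤ b₀ for a constant b₀ > 0. Fix 1 ≤ m ≤ M and 1 ≤ n ≤ N. Let ζ = scan(x) be the (m,n)-scan statistic of x and let σ² = max_{i∈[M]} (1/N)Σ_{j∈[N]} x_ij². If ζ > 0, then the unidimensional permutation p-value satisfies 𝔓(x) ≤ C(M,m)·C(N,n)·exp(−ζ²/(2mnσ² + (2/3)b₀ζ)), where C(K,k) denotes the binomial coefficient. -/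
/-!
`Π₁` is `Fin M → Equiv.Perm (Fin N)` acting row by row, so the p-value counts the tuples of row
permutations whose scan reaches `ζ`. A union bound over the `C(M,m) C(N,n)` windows `I × J` and a
Chernoff bound leave the exponential moment of one window sum, which factorises over the rows of
`I`. In one row, sampling `n` distinct positions is dominated in exponential moment by sampling
with replacement: after the swap `a ↔ l`, `z(σa) z(σl) ≤ (z(σa)² + z(σl)²) / 2` shows that each
new position costs at most the mean of `z`. For a centred row, Bernstein's bound
`eᵘ ≤ 1 + u + u² / (2 (1 - c/3))` (`u ≤ c < 3`) bounds that mean by `exp (λ²σ² / (2 (1 - λb₀/3)))`,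
and `λ = ζ / (m n σ² + b₀ ζ / 3)` gives the exponent.
-/

open Finset Set

noncomputable section

/-- The `(m,n)`-scan statistic of an `M × N` real matrix. -/
def scan (M N m n : ℕ) (x : Fin M → Fin N → ℝ) : ℝ :=
  sSup {s : ℝ | ∃ I : Finset (Fin M), ∃ J : Finset (Fin N),
    I.card = m ∧ J.card = n ∧ s = ∑ i ∈ I, ∑ j ∈ J, x i j}

/-- `Π₁`: permutations of `[M] × [N]` that fix the row index (permute within rows). -/
def Pi1 (M N : ℕ) : Set (Equiv.Perm (Fin M × Fin N)) := {π | ∀ p, (π p).1 = p.1}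

/-- The matrix `x` permuted by `π`, i.e. `(x_π)_{ij} = x_{π(i,j)}`. -/
def permute {M N : ℕ} (π : Equiv.Perm (Fin M × Fin N)) (x : Fin M → Fin N → ℝ) :
    Fin M → Fin N → ℝ := fun i j => x (π (i, j)).1 (π (i, j)).2

/-- The permutation p-value of the `(m,n)`-scan statistic, calibrated over `G`. -/
def permPval (M N m n : ℕ) (G : Set (Equiv.Perm (Fin M × Fin N)))
    (x : Fin M → Fin N → ℝ) : ℝ :=
  ({π ∈ G | scan M N m n x ≤ scan M N m n (permute π x)}.ncard : ℝ) / (G.ncard : ℝ)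

namespace Real

lemma exp_le_one_add_add_sq_div_two_of_nonpos_s11 {u : ℝ} (hu : u ≤ 0) :
    exp u ≤ 1 + u + u ^ 2 / 2 := by
  obtain ⟨t, ht, rfl⟩ : ∃ t, 0 ≤ t ∧ u = -t := ⟨-u, by linarith, by ring⟩
  have hcubic : 1 + t + t ^ 2 / 2 + t ^ 3 / 6 ≤ exp t := by
    simpa [Finset.sum_range_succ, Nat.factorial] using sum_le_exp_of_nonneg ht 4
  -- `(1 + t + t²/2 + t³/6)(1 - t + t²/2) = 1 + t³/6 + t⁴/12 + t⁵/12`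
  have hprod : 1 ≤ exp t * (1 - t + t ^ 2 / 2) := by
    nlinarith [mul_le_mul_of_nonneg_right hcubic (by nlinarith : (0:ℝ) ≤ 1 - t + t ^ 2 / 2),
      pow_nonneg ht 3, pow_nonneg ht 4, pow_nonneg ht 5]
  rw [exp_neg, inv_eq_one_div, div_le_iff₀ (exp_pos t)]
  nlinarith

lemma exp_le_one_add_add_sq_div_of_nonneg {u : ℝ} (hu0 : 0 ≤ u) (hu3 : u < 3) :
    exp u ≤ 1 + u + u ^ 2 / (2 * (1 - u / 3)) := by
  have hq0 : 0 ≤ u / 3 := by positivity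
  have hq1 : u / 3 < 1 := by linarith
  have htail : HasSum (fun k : ℕ => u ^ (k + 2) / (k + 2).factorial) (exp u - (1 + u)) := by
    have hexp : HasSum (fun k : ℕ => u ^ k / k.factorial) (exp u) := by
      rw [exp_eq_exp_ℝ]
      exact NormedSpace.expSeries_div_hasSum_exp u
    simpa [Finset.sum_range_succ] using (hasSum_nat_add_iff' 2).mpr hexp
  have hgeom : HasSum (fun k : ℕ => u ^ 2 / 2 * (u / 3) ^ k) (u ^ 2 / 2 * (1 - u / 3)⁻¹) :=
    (hasSum_geometric_of_lt_one hq0 hq1).mul_left _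
  have hterm (k : ℕ) : u ^ (k + 2) / (k + 2).factorial ≤ u ^ 2 / 2 * (u / 3) ^ k := by
    have hfac : (2 * 3 ^ k : ℝ) ≤ (k + 2).factorial := by
      rw [add_comm k]; exact_mod_cast Nat.factorial_mul_pow_le_factorial (m := 2) (n := k)
    rw [div_le_iff₀ (by positivity)]
    calc u ^ (k + 2) = u ^ 2 / 2 * (u / 3) ^ k * (2 * 3 ^ k) := by rw [div_pow]; field_simp; ring
      _ ≤ _ := by gcongr
  have hrest := hasSum_le hterm htail hgeom
  rw [div_mul_eq_div_div, div_eq_mul_inv (u ^ 2 / 2)]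
  linarith

lemma exp_le_one_add_add_sq_div_of_le {u c : ℝ} (hc0 : 0 ≤ c) (hc3 : c < 3) (huc : u ≤ c) :
    exp u ≤ 1 + u + u ^ 2 / (2 * (1 - c / 3)) := by
  rcases le_or_gt u 0 with hu | hu
  · calc exp u ≤ 1 + u + u ^ 2 / 2 := exp_le_one_add_add_sq_div_two_of_nonpos_s11 hu
      _ ≤ _ := by gcongr <;> linarith
  · calc exp u ≤ 1 + u + u ^ 2 / (2 * (1 - u / 3)) :=
          exp_le_one_add_add_sq_div_of_nonneg hu.le (by linarith)
      _ ≤ _ := by gcongr; linarith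

end Real

section PermProd

variable {α : Type*} [Fintype α] [DecidableEq α]

lemma sum_perm_apply_mul_prod_eq_of_notMem (g z : α → ℝ) {K : Finset α} {a l : α}
    (ha : a ∉ K) (hl : l ∉ K) :
    ∑ σ : Equiv.Perm α, g (σ a) * ∏ j ∈ K, z (σ j)
      = ∑ σ : Equiv.Perm α, g (σ l) * ∏ j ∈ K, z (σ j) := by
  rw [← Equiv.sum_comp (Equiv.mulRight (Equiv.swap l a))]
  refine sum_congr rfl fun σ _ => ?_
  have hK : ∀ j ∈ K, z (σ (Equiv.swap l a j)) = z (σ j) := fun j hj => by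
    rw [Equiv.swap_apply_of_ne_of_ne (ne_of_mem_of_not_mem hj hl) (ne_of_mem_of_not_mem hj ha)]
  simp only [Equiv.coe_mulRight, Equiv.Perm.mul_apply, Equiv.swap_apply_right, prod_congr rfl hK]

lemma sum_perm_apply_mul_prod_le {z : α → ℝ} (hz : 0 ≤ z) {J : Finset α} {a : α} (ha : a ∉ J)
    (l : α) :
    ∑ σ : Equiv.Perm α, z (σ a) * ∏ j ∈ J, z (σ j)
      ≤ ∑ σ : Equiv.Perm α, z (σ l) * ∏ j ∈ J, z (σ j) := by
  by_cases hlJ : l ∈ J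
  · have ha' : a ∉ J.erase l := fun h => ha (mem_of_mem_erase h)
    have hsq := sum_perm_apply_mul_prod_eq_of_notMem (z ^ 2) z ha' (notMem_erase l J)
    simp only [Pi.pow_apply] at hsq
    simp only [← mul_prod_erase J _ hlJ, ← mul_assoc]
    -- `z(σa) z(σl) ≤ (z(σa)² + z(σl)²)/2`, and the swap `a ↔ l` identifies the two squares.
    calc ∑ σ : Equiv.Perm α, z (σ a) * z (σ l) * ∏ j ∈ J.erase l, z (σ j)
        ≤ ∑ σ : Equiv.Perm α, (z (σ a) ^ 2 / 2 + z (σ l) ^ 2 / 2) * ∏ j ∈ J.erase l, z (σ j) := by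
          gcongr with σ
          · exact prod_nonneg fun j _ => hz _
          · nlinarith [sq_nonneg (z (σ a) - z (σ l))]
      _ = ∑ σ : Equiv.Perm α, z (σ l) * z (σ l) * ∏ j ∈ J.erase l, z (σ j) := by
          simp only [add_mul, sum_add_distrib, div_mul_eq_mul_div, ← sum_div, hsq]
          simp only [sq, add_halves]
  · exact (sum_perm_apply_mul_prod_eq_of_notMem z z ha hlJ).le

lemma card_mul_sum_perm_apply_mul_prod_le {z : α → ℝ} (hz : 0 ≤ z) {J : Finset α} {a : α}
    (ha : a ∉ J) :
    Fintype.card α * ∑ σ : Equiv.Perm α, z (σ a) * ∏ j ∈ J, z (σ j)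
      ≤ (∑ j, z j) * ∑ σ : Equiv.Perm α, ∏ j ∈ J, z (σ j) := by
  calc Fintype.card α * ∑ σ : Equiv.Perm α, z (σ a) * ∏ j ∈ J, z (σ j)
      = ∑ _l : α, ∑ σ : Equiv.Perm α, z (σ a) * ∏ j ∈ J, z (σ j) := by
        rw [sum_const, card_univ, nsmul_eq_mul]
    _ ≤ ∑ l : α, ∑ σ : Equiv.Perm α, z (σ l) * ∏ j ∈ J, z (σ j) :=
        sum_le_sum fun l _ => sum_perm_apply_mul_prod_le hz ha l
    _ = ∑ σ : Equiv.Perm α, (∑ l, z (σ l)) * ∏ j ∈ J, z (σ j) := by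
        rw [sum_comm]; simp only [sum_mul]
    _ = (∑ j, z j) * ∑ σ : Equiv.Perm α, ∏ j ∈ J, z (σ j) := by
        simp only [Equiv.sum_comp, mul_sum]

lemma sum_perm_prod_le {z : α → ℝ} (hz : 0 ≤ z) (J : Finset α) :
    ∑ σ : Equiv.Perm α, ∏ j ∈ J, z (σ j)
      ≤ (Fintype.card α).factorial * ((∑ j, z j) / Fintype.card α) ^ #J := by
  induction J using Finset.induction_on with
  | empty => simp [Fintype.card_perm]
  | @insert a J ha ih =>
    have hcard : (0 : ℝ) < Fintype.card α := by
      exact_mod_cast Fintype.card_pos_iff.mpr ⟨a⟩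
    have hmean : 0 ≤ (∑ j, z j) / Fintype.card α := by
      have := Finset.sum_nonneg fun j (_ : j ∈ Finset.univ) => hz j
      positivity
    calc ∑ σ : Equiv.Perm α, ∏ j ∈ insert a J, z (σ j)
        ≤ (∑ j, z j) / Fintype.card α * ∑ σ : Equiv.Perm α, ∏ j ∈ J, z (σ j) := by
          simp only [prod_insert ha]
          rw [div_mul_eq_mul_div, le_div_iff₀ hcard, mul_comm]
          exact card_mul_sum_perm_apply_mul_prod_le hz ha
      _ ≤ (∑ j, z j) / Fintype.card α
            * ((Fintype.card α).factorial * ((∑ j, z j) / Fintype.card α) ^ #J) := by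
          gcongr
      _ = _ := by rw [card_insert_of_notMem ha, pow_succ]; ring

end PermProd

section RowMGF

variable {α : Type*} [Fintype α] [Nonempty α]

lemma sum_exp_mul_div_card_le {y : α → ℝ} {b lam v : ℝ} (hsum : ∑ j, y j = 0)
    (hb : ∀ j, y j ≤ b) (hlam : 0 ≤ lam) (hb0 : 0 ≤ lam * b) (hb3 : lam * b < 3)
    (hv : (∑ j, y j ^ 2) / Fintype.card α ≤ v) :
    (∑ j, Real.exp (lam * y j)) / Fintype.card α
      ≤ 1 + lam ^ 2 * v / (2 * (1 - lam * b / 3)) := by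
  have hcard : (0 : ℝ) < Fintype.card α := by exact_mod_cast Fintype.card_pos
  have hd : 0 < 2 * (1 - lam * b / 3) := by linarith
  calc (∑ j, Real.exp (lam * y j)) / Fintype.card α
      ≤ (∑ j, (1 + lam * y j + (lam * y j) ^ 2 / (2 * (1 - lam * b / 3)))) / Fintype.card α := by
        gcongr with j
        exact Real.exp_le_one_add_add_sq_div_of_le hb0 hb3 (by gcongr; exact hb j)
    _ = 1 + lam ^ 2 * ((∑ j, y j ^ 2) / Fintype.card α) / (2 * (1 - lam * b / 3)) := by
        simp only [sum_add_distrib, ← mul_sum, hsum, mul_pow, ← sum_div, sum_const, card_univ,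
          nsmul_eq_mul]
        field_simp
        ring
    _ ≤ 1 + lam ^ 2 * v / (2 * (1 - lam * b / 3)) := by gcongr

lemma sum_perm_exp_mul_sum_le [DecidableEq α] {y : α → ℝ} {b lam v : ℝ} (hsum : ∑ j, y j = 0)
    (hb : ∀ j, y j ≤ b) (hlam : 0 ≤ lam) (hb0 : 0 ≤ lam * b) (hb3 : lam * b < 3)
    (hv : (∑ j, y j ^ 2) / Fintype.card α ≤ v) (J : Finset α) :
    ∑ σ : Equiv.Perm α, Real.exp (lam * ∑ j ∈ J, y (σ j))
      ≤ (Fintype.card α).factorial * Real.exp (#J * (lam ^ 2 * v / (2 * (1 - lam * b / 3)))) := by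
  have hw : 0 ≤ lam ^ 2 * v / (2 * (1 - lam * b / 3)) :=
    div_nonneg (mul_nonneg (sq_nonneg lam) (le_trans (by positivity) hv)) (by linarith)
  calc ∑ σ : Equiv.Perm α, Real.exp (lam * ∑ j ∈ J, y (σ j))
      = ∑ σ : Equiv.Perm α, ∏ j ∈ J, Real.exp (lam * y (σ j)) := by
        simp only [mul_sum, Real.exp_sum]
    _ ≤ (Fintype.card α).factorial
          * ((∑ j, Real.exp (lam * y j)) / Fintype.card α) ^ #J :=
        sum_perm_prod_le (z := fun j => Real.exp (lam * y j)) (fun j => (Real.exp_pos _).le) J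
    _ ≤ (Fintype.card α).factorial * (1 + lam ^ 2 * v / (2 * (1 - lam * b / 3))) ^ #J := by
        gcongr
        exact sum_exp_mul_div_card_le hsum hb hlam hb0 hb3 hv
    _ ≤ (Fintype.card α).factorial * Real.exp (lam ^ 2 * v / (2 * (1 - lam * b / 3))) ^ #J := by
        gcongr
        rw [add_comm]
        exact Real.add_one_le_exp _
    _ = _ := by rw [← Real.exp_nat_mul]

end RowMGF

lemma sum_exp_sum_apply_le {ι κ : Type*} [Fintype ι] [DecidableEq ι] [Fintype κ]
    (I : Finset ι) (T : ι → κ → ℝ) {E : ℝ}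
    (hT : ∀ i ∈ I, ∑ k, Real.exp (T i k) ≤ Fintype.card κ * E) :
    ∑ f : ι → κ, Real.exp (∑ i ∈ I, T i (f i)) ≤ Fintype.card κ ^ Fintype.card ι * E ^ #I := by
  calc ∑ f : ι → κ, Real.exp (∑ i ∈ I, T i (f i))
      = ∏ i, ∑ k, if i ∈ I then Real.exp (T i k) else 1 := by
        rw [Fintype.prod_sum]
        refine sum_congr rfl fun f _ => ?_
        rw [Real.exp_sum, prod_ite_mem, Finset.univ_inter]
    _ ≤ ∏ i, Fintype.card κ * if i ∈ I then E else 1 := by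
        refine prod_le_prod (fun i _ => sum_nonneg fun k _ => ?_) fun i _ => ?_
        · split_ifs <;> positivity
        · by_cases hi : i ∈ I <;> simp [hi, hT]
    _ = _ := by
        rw [prod_mul_distrib, prod_ite_mem, Finset.univ_inter, prod_const, prod_const, card_univ]

lemma card_filter_le_exp_mul_sum_exp {ι : Type*} (s : Finset ι) (S : ι → ℝ) {lam : ℝ}
    (hlam : 0 ≤ lam) (ζ : ℝ) :
    (#{i ∈ s | ζ ≤ S i} : ℝ) ≤ Real.exp (-(lam * ζ)) * ∑ i ∈ s, Real.exp (lam * S i) := by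
  rw [card_filter, Nat.cast_sum, mul_sum]
  refine sum_le_sum fun i _ => ?_
  rw [← Real.exp_add]
  split_ifs with h
  · exact_mod_cast Real.one_le_exp (by nlinarith)
  · exact_mod_cast (Real.exp_pos _).le

lemma exists_scan_eq_sum {M N m n : ℕ} (hmM : m ≤ M) (hnN : n ≤ N) (x : Fin M → Fin N → ℝ) :
    ∃ I : Finset (Fin M), ∃ J : Finset (Fin N), #I = m ∧ #J = n ∧
      scan M N m n x = ∑ i ∈ I, ∑ j ∈ J, x i j := by
  set S := {s : ℝ | ∃ I : Finset (Fin M), ∃ J : Finset (Fin N),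
    #I = m ∧ #J = n ∧ s = ∑ i ∈ I, ∑ j ∈ J, x i j}
  have hfin : S.Finite := (Set.finite_range fun p : Finset (Fin M) × Finset (Fin N) =>
    ∑ i ∈ p.1, ∑ j ∈ p.2, x i j).subset fun s ⟨I, J, _, _, hs⟩ => ⟨(I, J), hs.symm⟩
  obtain ⟨I, -, hI⟩ := exists_subset_card_eq (s := (univ : Finset (Fin M))) (by simpa using hmM)
  obtain ⟨J, -, hJ⟩ := exists_subset_card_eq (s := (univ : Finset (Fin N))) (by simpa using hnN)
  exact Set.Nonempty.csSup_mem (s := S) ⟨_, I, J, hI, hJ, rfl⟩ hfin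

lemma exists_pos_of_scan_pos {M N m n : ℕ} {x : Fin M → Fin N → ℝ}
    (h : 0 < scan M N m n x) : ∃ i j, 0 < x i j := by
  by_contra! hx
  refine h.not_ge (Real.sSup_nonpos fun s ⟨I, J, _, _, hs⟩ => ?_)
  rw [hs]
  exact sum_nonpos fun i _ => sum_nonpos fun j _ => hx i j

lemma Equiv.prodCongrRight_injective {α β γ : Type*} :
    Function.Injective (Equiv.prodCongrRight : (α → β ≃ γ) → α × β ≃ α × γ) :=
  fun _ _ h => funext fun i => Equiv.ext fun j => congrArg Prod.snd (Equiv.ext_iff.mp h (i, j))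

section Pi1

variable {M N : ℕ}

lemma mem_Pi1_iff {π : Equiv.Perm (Fin M × Fin N)} :
    π ∈ Pi1 M N ↔ ∃ f : Fin M → Equiv.Perm (Fin N), Equiv.prodCongrRight f = π := by
  refine ⟨fun hπ => ?_, fun ⟨f, hf⟩ p => by rw [← hf]; rfl⟩
  have hsymm (p) : (π.symm p).1 = p.1 := by simpa using (hπ (π.symm p)).symm
  have hπ' (i j) : π (i, j) = (i, (π (i, j)).2) := Prod.ext (hπ _) rfl
  have hsymm' (i j) : π.symm (i, j) = (i, (π.symm (i, j)).2) := Prod.ext (hsymm _) rfl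
  refine ⟨fun i => ⟨fun j => (π (i, j)).2, fun j => (π.symm (i, j)).2, fun j => ?_, fun j => ?_⟩,
    Equiv.ext fun ⟨i, j⟩ => (hπ' i j).symm⟩
  · simp [← hπ']
  · simp [← hsymm']

lemma ncard_sep_Pi1 (P : Equiv.Perm (Fin M × Fin N) → Prop) [DecidablePred P] :
    {π ∈ Pi1 M N | P π}.ncard = #{f : Fin M → Equiv.Perm (Fin N) | P (Equiv.prodCongrRight f)} := by
  have : {π ∈ Pi1 M N | P π} = Equiv.prodCongrRight '' {f | P (Equiv.prodCongrRight f)} := by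
    ext π
    simp only [mem_Pi1_iff, Set.mem_image, Set.mem_ofPred_eq]
    constructor
    · rintro ⟨⟨f, rfl⟩, hP⟩; exact ⟨f, hP, rfl⟩
    · rintro ⟨f, hP, rfl⟩; exact ⟨⟨f, rfl⟩, hP⟩
  rw [this, Set.ncard_image_of_injective _ Equiv.prodCongrRight_injective,
    Set.ncard_eq_toFinset_card']
  simp

lemma permPval_Pi1 (m n : ℕ) (x : Fin M → Fin N → ℝ) :
    permPval M N m n (Pi1 M N) x
      = #{f : Fin M → Equiv.Perm (Fin N) |
          scan M N m n x ≤ scan M N m n (fun i j => x i (f i j))} / (N.factorial : ℝ) ^ M := by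
  have hall := ncard_sep_Pi1 (M := M) (N := N) fun _ => True
  rw [Set.sep_true, Finset.filter_true, card_univ, Fintype.card_pi] at hall
  simp only [Fintype.card_perm, Fintype.card_fin, prod_const, card_univ] at hall
  rw [permPval, hall, ncard_sep_Pi1]
  push_cast
  rfl

end Pi1

lemma exists_bernstein_exponent_eq {V b ζ : ℝ} (hV : 0 < V) (hb : 0 ≤ b) (hζ : 0 < ζ) :
    ∃ lam : ℝ, 0 < lam ∧ lam * b < 3 ∧
      -(lam * ζ) + V * (lam ^ 2 / (2 * (1 - lam * b / 3))) = -ζ ^ 2 / (2 * V + 2 / 3 * b * ζ) := by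
  have hD : 0 < V + b * ζ / 3 := by positivity
  refine ⟨ζ / (V + b * ζ / 3), by positivity, ?_, ?_⟩
  · rw [div_mul_eq_mul_div, div_lt_iff₀ hD]
    linarith
  · have h1 : 1 - ζ / (V + b * ζ / 3) * b / 3 = V / (V + b * ζ / 3) := by
      field_simp
      ring
    rw [h1]
    field_simp
    ring

section Count

variable {M N m n : ℕ} [NeZero N] {x : Fin M → Fin N → ℝ} {b lam s2 : ℝ}

lemma card_le_window_sum_le (hrow : ∀ i, ∑ j, x i j = 0) (hbd : ∀ i j, x i j ≤ b)
    (hlam : 0 ≤ lam) (hb0 : 0 ≤ lam * b) (hb3 : lam * b < 3)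
    (hs2 : ∀ i, (∑ j, x i j ^ 2) / N ≤ s2) (ζ : ℝ) (I : Finset (Fin M)) (J : Finset (Fin N)) :
    (#{f : Fin M → Equiv.Perm (Fin N) | ζ ≤ ∑ i ∈ I, ∑ j ∈ J, x i (f i j)} : ℝ)
      ≤ (N.factorial : ℝ) ^ M
        * Real.exp (-(lam * ζ) + #I * (#J * (lam ^ 2 * s2 / (2 * (1 - lam * b / 3))))) := by
  have hrowMGF : ∀ i ∈ I, ∑ σ : Equiv.Perm (Fin N), Real.exp (lam * ∑ j ∈ J, x i (σ j))
      ≤ Fintype.card (Equiv.Perm (Fin N))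
        * Real.exp (#J * (lam ^ 2 * s2 / (2 * (1 - lam * b / 3)))) := fun i _ => by
    simpa [Fintype.card_perm] using
      sum_perm_exp_mul_sum_le (hrow i) (hbd i) hlam hb0 hb3 (by simpa using hs2 i) J
  calc (#{f : Fin M → Equiv.Perm (Fin N) | ζ ≤ ∑ i ∈ I, ∑ j ∈ J, x i (f i j)} : ℝ)
      ≤ Real.exp (-(lam * ζ)) * ∑ f : Fin M → Equiv.Perm (Fin N),
          Real.exp (lam * ∑ i ∈ I, ∑ j ∈ J, x i (f i j)) :=
        card_filter_le_exp_mul_sum_exp _ _ hlam ζ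
    _ ≤ Real.exp (-(lam * ζ)) * ((N.factorial : ℝ) ^ M
          * Real.exp (#J * (lam ^ 2 * s2 / (2 * (1 - lam * b / 3)))) ^ #I) := by
        gcongr
        simpa [mul_sum, Fintype.card_perm] using sum_exp_sum_apply_le I _ hrowMGF
    _ = _ := by
        rw [← Real.exp_nat_mul, mul_left_comm, ← Real.exp_add]

lemma card_le_scan_le (hmM : m ≤ M) (hnN : n ≤ N) (hrow : ∀ i, ∑ j, x i j = 0)
    (hbd : ∀ i j, x i j ≤ b) (hlam : 0 ≤ lam) (hb0 : 0 ≤ lam * b) (hb3 : lam * b < 3)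
    (hs2 : ∀ i, (∑ j, x i j ^ 2) / N ≤ s2) (ζ : ℝ) :
    (#{f : Fin M → Equiv.Perm (Fin N) | ζ ≤ scan M N m n (fun i j => x i (f i j))} : ℝ)
      ≤ M.choose m * N.choose n * ((N.factorial : ℝ) ^ M
        * Real.exp (-(lam * ζ) + m * (n * (lam ^ 2 * s2 / (2 * (1 - lam * b / 3)))))) := by
  set windows := powersetCard m (univ : Finset (Fin M)) ×ˢ powersetCard n (univ : Finset (Fin N))
  have hcover : ({f : Fin M → Equiv.Perm (Fin N) | ζ ≤ scan M N m n (fun i j => x i (f i j))} :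
      Finset _) ⊆ windows.biUnion fun w =>
        {f : Fin M → Equiv.Perm (Fin N) | ζ ≤ ∑ i ∈ w.1, ∑ j ∈ w.2, x i (f i j)} := by
    intro f hf
    obtain ⟨I, J, hI, hJ, heq⟩ := exists_scan_eq_sum hmM hnN fun i j => x i (f i j)
    simp only [mem_filter, Finset.mem_univ, true_and, heq] at hf
    simp only [Finset.mem_biUnion, mem_filter, Finset.mem_univ, true_and]
    exact ⟨(I, J), mem_product.mpr ⟨mem_powersetCard_univ.mpr hI, mem_powersetCard_univ.mpr hJ⟩, hf⟩
  calc (#{f : Fin M → Equiv.Perm (Fin N) | ζ ≤ scan M N m n (fun i j => x i (f i j))} : ℝ)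
      ≤ ∑ w ∈ windows, (#{f : Fin M → Equiv.Perm (Fin N) |
          ζ ≤ ∑ i ∈ w.1, ∑ j ∈ w.2, x i (f i j)} : ℝ) := by
        exact_mod_cast (Finset.card_le_card hcover).trans card_biUnion_le
    _ ≤ ∑ _w ∈ windows, (N.factorial : ℝ) ^ M
          * Real.exp (-(lam * ζ) + m * (n * (lam ^ 2 * s2 / (2 * (1 - lam * b / 3))))) := by
        refine sum_le_sum fun w hw => ?_
        obtain ⟨hI, hJ⟩ := mem_product.mp hw
        rw [← (mem_powersetCard_univ.mp hI), ← (mem_powersetCard_univ.mp hJ)]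
        exact card_le_window_sum_le hrow hbd hlam hb0 hb3 hs2 ζ w.1 w.2
    _ = _ := by
        rw [sum_const, nsmul_eq_mul, card_product, card_powersetCard, card_powersetCard,
          card_univ, card_univ, Fintype.card_fin, Fintype.card_fin]
        push_cast
        ring

end Count

/-- Bound on the unidimensional permutation p-value of the scan statistic for a matrix
with centered rows and entries bounded above by `b₀`. -/
theorem perm_pval_bound (M N m n : ℕ) (hm1 : 1 ≤ m) (hmM : m ≤ M)
    (hn1 : 1 ≤ n) (hnN : n ≤ N)
    (x : Fin M → Fin N → ℝ) (b0 : ℝ) (hb0 : 0 < b0)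
    (hrow : ∀ i, ∑ j, x i j = 0) (hbd : ∀ i j, x i j ≤ b0)
    (hpos : 0 < scan M N m n x) :
    permPval M N m n (Pi1 M N) x
      ≤ (Nat.choose M m : ℝ) * (Nat.choose N n : ℝ) *
          Real.exp (-(scan M N m n x ^ 2) /
            (2 * (m : ℝ) * (n : ℝ) * (⨆ i : Fin M, (∑ j, x i j ^ 2) / (N : ℝ))
              + (2 / 3) * b0 * scan M N m n x)) := by
  have : NeZero N := ⟨by omega⟩
  set s2 := ⨆ i : Fin M, (∑ j, x i j ^ 2) / (N : ℝ)
  have hs2 (i : Fin M) : (∑ j, x i j ^ 2) / N ≤ s2 :=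
    le_ciSup (f := fun i => (∑ j, x i j ^ 2) / (N : ℝ)) (Set.finite_range _).bddAbove i
  have hs2pos : 0 < s2 := by
    obtain ⟨i, j, hij⟩ := exists_pos_of_scan_pos hpos
    have hsq : x i j ^ 2 ≤ ∑ j, x i j ^ 2 :=
      single_le_sum (fun j _ => sq_nonneg (x i j)) (Finset.mem_univ j)
    exact (div_pos ((pow_pos hij 2).trans_le hsq) (Nat.cast_pos.mpr (NeZero.pos N))).trans_le
      (hs2 i)
  obtain ⟨lam, hlam, hb3, hexp⟩ :=
    exists_bernstein_exponent_eq (V := m * n * s2)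
      (mul_pos (mul_pos (Nat.cast_pos.mpr hm1) (Nat.cast_pos.mpr hn1)) hs2pos) hb0.le hpos
  have hexponent : -(lam * scan M N m n x) + m * (n * (lam ^ 2 * s2 / (2 * (1 - lam * b0 / 3))))
      = -scan M N m n x ^ 2 / (2 * m * n * s2 + 2 / 3 * b0 * scan M N m n x) := by
    rw [show 2 * (m : ℝ) * n * s2 = 2 * (m * n * s2) by ring, ← hexp]
    ring
  rw [permPval_Pi1, div_le_iff₀ (pow_pos (Nat.cast_pos.mpr N.factorial_pos) M)]
  calc _ ≤ _ := card_le_scan_le hmM hnN hrow hbd hlam.le (by positivity) hb3 hs2 _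
    _ = _ := by rw [hexponent]; ring
end
end

section
/- Let ν be a Borel probability measure on ℝ with mean 0 and variance 1 such that φ(θ) := ∫ e^{θx} ν(dx) < ∞ for some θ > 0, and set θ⋆ := sup{θ > 0 : φ(θ) < ∞}. Fix θ̄ ∈ (0, θ⋆). Then there exists a constant γ̄ > 0 (depending only on ν and θ̄) such that: for every sequence where, for each k, X₁, …, X_k are independent with X_j distributed as the exponential tilt f_{θ_j} of ν for some θ_j ∈ [0, θ̄], one has P(max_{j∈[k]} X_j ≤ γ̄·log k) → 1 as k → ∞. -/
/-!
Since `ν` has mean zero, `e^y ≥ 1 + y` gives `φ(θ) ≥ 1`, so the tilted density `e^{θx}/φ(θ)` is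
at most `e^{θx}`. Fix `θ' > θ̄` with `φ(θ') < ∞`; a Chernoff bound then gives
`f_θ(X > t) ≤ φ(θ') e^{-(θ' - θ̄) t}` uniformly in `θ ∈ [0, θ̄]`. With `γ̄ = 2 / (θ' - θ̄)` each
coordinate exceeds `γ̄ log k` with probability at most `φ(θ') / k²`, and a union bound over the
`k` coordinates gives `P(max_j X_j > γ̄ log k) ≤ φ(θ') / k → 0`.
-/

open MeasureTheory Filter

noncomputable section

/-- The moment generating function of `ν` at `θ`: `φ(θ) = ∫ e^{θx} ν(dx)`. -/
def phi (ν : Measure ℝ) (θ : ℝ) : ℝ := ∫ x, Real.exp (θ * x) ∂ν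

/-- The exponential tilt `f_θ` of `ν`, with density `e^{θx}/φ(θ)` with respect to `ν`. -/
def expTilt (ν : Measure ℝ) (θ : ℝ) : Measure ℝ :=
  ν.withDensity fun x => ENNReal.ofReal (Real.exp (θ * x) / phi ν θ)

open Set Real
open scoped Topology

lemma expTilt_eq_tilted (ν : Measure ℝ) (θ : ℝ) : expTilt ν θ = ν.tilted (θ * ·) := rfl

section Tilt

variable {ν : Measure ℝ}

lemma isProbabilityMeasure_expTilt [NeZero ν] {θ : ℝ}
    (hI : Integrable (fun x => exp (θ * x)) ν) : IsProbabilityMeasure (expTilt ν θ) := by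
  rw [expTilt_eq_tilted]
  exact isProbabilityMeasure_tilted hI

lemma one_le_phi [IsProbabilityMeasure ν] (hmean : ∫ x, x ∂ν = 0)
    (hid : Integrable (fun x : ℝ => x) ν) {θ : ℝ} (hI : Integrable (fun x => exp (θ * x)) ν) :
    1 ≤ phi ν θ := by
  have hlin : Integrable (fun x => θ * x + 1) ν := (hid.const_mul θ).add (integrable_const 1)
  calc 1 = ∫ x, (θ * x + 1) ∂ν := by
        rw [integral_add (hid.const_mul θ) (integrable_const 1), integral_const_mul, hmean]
        simp
    _ ≤ phi ν θ := integral_mono hlin hI fun x => add_one_le_exp (θ * x)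

/-- Chernoff bound for the tilt, with the factor `1 / φ(θ)` of the density discarded. -/
lemma expTilt_Ioi_le {θ θ' s t : ℝ} (hphi : 1 ≤ phi ν θ) (hs : 0 ≤ s) (hθ : θ + s ≤ θ')
    (ht : 0 ≤ t) (hI' : Integrable (fun x => exp (θ' * x)) ν) :
    expTilt ν θ (Ioi t) ≤ ENNReal.ofReal (exp (-(s * t)) * phi ν θ') := by
  have hdensity : ∀ x ∈ Ioi t, ENNReal.ofReal (exp (θ * x) / phi ν θ) ≤
      ENNReal.ofReal (exp (-(s * t)) * exp (θ' * x)) := by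
    intro x (hx : t < x)
    refine ENNReal.ofReal_le_ofReal ((div_le_self (exp_pos _).le hphi).trans ?_)
    rw [← exp_add]
    exact exp_le_exp.2 (by nlinarith)
  calc expTilt ν θ (Ioi t)
      = ∫⁻ x in Ioi t, ENNReal.ofReal (exp (θ * x) / phi ν θ) ∂ν :=
        withDensity_apply _ measurableSet_Ioi
    _ ≤ ∫⁻ x in Ioi t, ENNReal.ofReal (exp (-(s * t)) * exp (θ' * x)) ∂ν :=
        setLIntegral_mono' measurableSet_Ioi hdensity
    _ ≤ ∫⁻ x, ENNReal.ofReal (exp (-(s * t)) * exp (θ' * x)) ∂ν := setLIntegral_le_lintegral _ _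
    _ = ENNReal.ofReal (exp (-(s * t)) * phi ν θ') := by
        rw [← ofReal_integral_eq_lintegral_ofReal (hI'.const_mul _)
          (ae_of_all _ fun x => by positivity), integral_const_mul, phi]

end Tilt

section Maximum

lemma pi_exists_lt_le {ι : Type*} [Fintype ι] (μ : ι → Measure ℝ)
    [∀ i, IsProbabilityMeasure (μ i)] (t : ℝ) :
    Measure.pi μ {ω | ∃ i, t < ω i} ≤ ∑ i, μ i (Ioi t) := by
  have hunion : {ω : ι → ℝ | ∃ i, t < ω i} = ⋃ i, Function.eval i ⁻¹' Ioi t := by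
    ext ω; simp
  calc Measure.pi μ {ω | ∃ i, t < ω i}
      ≤ ∑ i, Measure.pi μ (Function.eval i ⁻¹' Ioi t) := hunion ▸ measure_iUnion_fintype_le _ _
    _ = ∑ i, μ i (Ioi t) := by
        simp_rw [(measurePreserving_eval μ _).measure_preimage measurableSet_Ioi.nullMeasurableSet]

lemma tendsto_pi_forall_le_one {μ : (k : ℕ) → Fin k → Measure ℝ}
    [∀ k j, IsProbabilityMeasure (μ k j)] {t ε : ℕ → ℝ}
    (hε : Tendsto (fun k => k * ε k) atTop (𝓝 0))
    (htail : ∀ᶠ k in atTop, ∀ j, μ k j (Ioi (t k)) ≤ ENNReal.ofReal (ε k)) :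
    Tendsto (fun k => Measure.pi (μ k) {ω | ∀ j, ω j ≤ t k}) atTop (𝓝 1) := by
  have hexceed : Tendsto (fun k => Measure.pi (μ k) {ω | ∃ j, t k < ω j}) atTop (𝓝 0) := by
    refine tendsto_of_tendsto_of_tendsto_of_le_of_le' tendsto_const_nhds
      (by simpa using ENNReal.tendsto_ofReal hε) (Eventually.of_forall fun _ => zero_le) ?_
    filter_upwards [htail] with k hk
    calc Measure.pi (μ k) {ω | ∃ j, t k < ω j}
        ≤ ∑ j, μ k j (Ioi (t k)) := pi_exists_lt_le _ _
      _ ≤ ∑ _j : Fin k, ENNReal.ofReal (ε k) := Finset.sum_le_sum fun j _ => hk j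
      _ = k * ENNReal.ofReal (ε k) := by simp
  have hcompl : ∀ k, Measure.pi (μ k) {ω | ∀ j, ω j ≤ t k} =
      1 - Measure.pi (μ k) {ω | ∃ j, t k < ω j} := by
    intro k
    rw [← prob_compl_eq_one_sub (by measurability)]
    congr 1
    ext ω; simp
  simpa [hcompl] using ENNReal.Tendsto.sub tendsto_const_nhds hexceed (Or.inl ENNReal.one_ne_top)

lemma tendsto_natCast_mul_div_sq (c : ℝ) :
    Tendsto (fun k : ℕ => k * (c / k ^ 2)) atTop (𝓝 0) := by
  have hsimp : (fun k : ℕ => k * (c / k ^ 2)) = fun k : ℕ => c / k := by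
    funext k
    rcases eq_or_ne (k : ℝ) 0 with hk | hk
    · simp [hk]
    · field_simp
  rw [hsimp]
  exact tendsto_const_div_atTop_nhds_zero_nat c

end Maximum

theorem max_tilted_le_log_general
    (ν : Measure ℝ) [IsProbabilityMeasure ν]
    (hmean : ∫ x, x ∂ν = 0) (hint2 : Integrable (fun x => x ^ 2) ν)
    (θbar : ℝ)
    (hθstar : ∃ θ' : ℝ, θbar < θ' ∧ Integrable (fun x => Real.exp (θ' * x)) ν) :
    ∃ γ : ℝ, 0 < γ ∧ ∀ θs : (k : ℕ) → Fin k → ℝ,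
      (∀ k j, 0 ≤ θs k j ∧ θs k j ≤ θbar) →
      Tendsto (fun k => (Measure.pi fun j : Fin k => expTilt ν (θs k j))
          {ω | ∀ j, ω j ≤ γ * Real.log k}) atTop (nhds 1) := by
  obtain ⟨θ', hθ', hI'⟩ := hθstar
  have hid : Integrable (fun x : ℝ => x) ν :=
    ((memLp_two_iff_integrable_sq aestronglyMeasurable_id).2 hint2).integrable one_le_two
  have hgap : 0 < θ' - θbar := sub_pos.2 hθ'
  refine ⟨2 / (θ' - θbar), div_pos two_pos hgap, fun θs hθs => ?_⟩
  have hI k j : Integrable (fun x => exp (θs k j * x)) ν :=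
    ProbabilityTheory.integrable_exp_mul_of_le_of_le (X := id) (by simp) hI'
      (hθs k j).1 ((hθs k j).2.trans hθ'.le)
  have (k) (j) : IsProbabilityMeasure (expTilt ν (θs k j)) := isProbabilityMeasure_expTilt (hI k j)
  refine tendsto_pi_forall_le_one (tendsto_natCast_mul_div_sq (phi ν θ')) ?_
  filter_upwards [eventually_ge_atTop 1] with k hk j
  refine (expTilt_Ioi_le (one_le_phi hmean hid (hI k j)) hgap.le (by linarith [(hθs k j).2])
    (by positivity) hI').trans_eq ?_
  have hk : (0 : ℝ) < k := by exact_mod_cast hk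
  have hexponent : (θ' - θbar) * (2 / (θ' - θbar) * log k) = log ((k : ℝ) ^ 2) := by
    rw [log_pow]
    field_simp
    push_cast
    ring
  rw [hexponent, exp_neg, exp_log (by positivity), inv_mul_eq_div]

/-- Uniform sub-exponential right tail of the tilted family: there is `γ̄ > 0` such that
for any choice of tilt parameters in `[0, θ̄]` with `θ̄ < θ⋆`, the maximum of `k`
independent tilted observations is at most `γ̄ log k` with probability tending to 1. -/
theorem max_tilted_le_log
    (ν : Measure ℝ) [IsProbabilityMeasure ν]
    (hmean : ∫ x, x ∂ν = 0) (hint2 : Integrable (fun x => x ^ 2) ν)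
    (hvar : ∫ x, x ^ 2 ∂ν = 1)
    (θbar : ℝ) (hθbar : 0 < θbar)
    (hθstar : ∃ θ' : ℝ, θbar < θ' ∧ Integrable (fun x => Real.exp (θ' * x)) ν) :
    ∃ γ : ℝ, 0 < γ ∧ ∀ θs : (k : ℕ) → Fin k → ℝ,
      (∀ k j, 0 ≤ θs k j ∧ θs k j ≤ θbar) →
      Tendsto (fun k => (Measure.pi fun j : Fin k => expTilt ν (θs k j))
          {ω | ∀ j, ω j ≤ γ * Real.log k}) atTop (nhds 1) :=
  max_tilted_le_log_general ν hmean hint2 θbar hθstar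
end
end

section
/- Let S be a finite index set, let G be a finite group of permutations of S, and let X be an S-indexed random vector in ℝ^S whose distribution is invariant under coordinate permutation by every π ∈ G (i.e., X∘π has the same distribution as X for all π ∈ G). Let T : ℝ^S → ℝ be measurable and define the permutation p-value 𝔓(X) = #{π ∈ G : T(X∘π) ≥ T(X)}/|G|. Then for every α ∈ [0,1], P(𝔓(X) ≤ α) ≤ α. -/
/-! Fix `ω`. Because `G` is a group, the count for the permuted data `ω ∘ g` is the number of
`h ∈ G` with `T (ω ∘ g) ≤ T (ω ∘ h)`, i.e. an upper rank of `g` for the values `T (ω ∘ ·)`; hence at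
most `⌊α |G|⌋` of the `|G|` permuted data sets have p-value `≤ α`. Averaging this count over `μ`,
which is invariant under each `g ∈ G`, gives `|G| · P(𝔓 ≤ α) ≤ α |G|`. -/

open MeasureTheory Set

section

open Finset

theorem card_filter_card_le_le {ι β : Type*} [Fintype ι] [LinearOrder β] (t : ι → β) (k : ℕ) :
    #{i | #{j | t i ≤ t j} ≤ k} ≤ k := by
  obtain hempty | ⟨i₀, hi₀, hmin⟩ :=
    ({i | #{j | t i ≤ t j} ≤ k} : Finset ι).eq_empty_or_nonempty.imp_right
      (Finset.exists_min_image _ t)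
  · simp [hempty]
  · refine (card_le_card fun i hi => ?_).trans (mem_filter.mp hi₀).2
    simpa using hmin i hi

theorem card_filter_mul_left {Γ : Type*} [Group Γ] [Fintype Γ] (p : Γ → Prop) [DecidablePred p]
    (g : Γ) : #{h | p (g * h)} = #{h | p h} :=
  card_equiv (Equiv.mulLeft g) (by simp)

theorem SetLike.ncard_setOf_mem_and {A Γ : Type*} [SetLike A Γ] (H : A) [Fintype H]
    (p : Γ → Prop) [DecidablePred p] : {g | g ∈ H ∧ p g}.ncard = #{h : H | p h} := by
  rw [← Set.ncard_coe_finset, ← Set.ncard_image_of_injective _ Subtype.val_injective]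
  congr
  ext g
  simp [and_comm]

theorem measurable_card_filter_mem {Ω ι : Type*} [MeasurableSpace Ω] [Fintype ι]
    {A : ι → Set Ω} [∀ i, DecidablePred (· ∈ A i)] (hA : ∀ i, MeasurableSet (A i)) :
    Measurable fun ω => #{i | ω ∈ A i} := by
  simp only [card_filter]
  exact Finset.measurable_sum _ fun i _ => Measurable.ite (hA i) measurable_const measurable_const

theorem card_mul_measure_le_of_map_eq {Ω ι : Type*} [MeasurableSpace Ω] [Fintype ι]
    {μ : Measure Ω} {f : ι → Ω → Ω} (hf : ∀ i, Measurable (f i)) (hinv : ∀ i, μ.map (f i) = μ)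
    {E : Set Ω} [DecidablePred (· ∈ E)] (hE : MeasurableSet E) {k : ℕ}
    (hk : ∀ ω, #{i | f i ω ∈ E} ≤ k) :
    Fintype.card ι * μ E ≤ k * μ univ := by
  have hpre : ∀ i, MeasurableSet (f i ⁻¹' E) := fun i => hE.preimage (hf i)
  calc (Fintype.card ι : ENNReal) * μ E = ∑ i, μ (f i ⁻¹' E) := by
        simp [← Measure.map_apply (hf _) hE, hinv]
    _ = ∫⁻ ω, ∑ i, (f i ⁻¹' E).indicator 1 ω ∂μ := by
        rw [lintegral_finsetSum _ fun i _ => measurable_one.indicator (hpre i)]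
        simp only [lintegral_indicator_one (hpre _)]
    _ = ∫⁻ ω, (#{i | f i ω ∈ E} : ENNReal) ∂μ := by
        refine lintegral_congr fun ω => ?_
        classical
        simp [Set.indicator_apply, Finset.sum_boole]
    _ ≤ ∫⁻ _, (k : ENNReal) ∂μ := lintegral_mono fun ω => Nat.cast_le.mpr (hk ω)
    _ = k * μ univ := lintegral_const _

end

theorem perm_pvalue_valid_general (S : Type*) [Fintype S]
    (G : Subgroup (Equiv.Perm S))
    (μ : Measure (S → ℝ)) [IsProbabilityMeasure μ]
    (hinv : ∀ π ∈ G, Measure.map (fun ω : S → ℝ => fun s => ω (π s)) μ = μ)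
    (T : (S → ℝ) → ℝ) (hT : Measurable T)
    (α : ℝ) (hα0 : 0 ≤ α) :
    μ {ω | ({π : Equiv.Perm S | π ∈ G ∧ T ω ≤ T (fun s => ω (π s))}.ncard : ℝ) /
            ((G : Set (Equiv.Perm S)).ncard : ℝ) ≤ α}
      ≤ ENNReal.ofReal α := by
  have : Fintype G := Fintype.ofFinite G
  set N := Fintype.card G
  have hN : (0 : ℝ) < N := by exact_mod_cast Fintype.card_pos
  let act : G → (S → ℝ) → (S → ℝ) := fun g ω s => ω ((g : Equiv.Perm S) s)
  have hact : ∀ g, Measurable (act g) := fun g =>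
    measurable_pi_lambda _ fun s => measurable_pi_apply _
  have hact_mul : ∀ g h ω, act h (act g ω) = act (g * h) ω := fun _ _ _ => rfl
  let count : (S → ℝ) → ℕ := fun ω => (Finset.univ.filter fun g => T ω ≤ T (act g ω)).card
  set k := ⌊α * N⌋₊
  have hevent : {ω | ({π : Equiv.Perm S | π ∈ G ∧ T ω ≤ T (fun s => ω (π s))}.ncard : ℝ) /
      ((G : Set (Equiv.Perm S)).ncard : ℝ) ≤ α} = {ω | count ω ≤ k} := by
    ext ω
    rw [mem_ofPred_eq, mem_ofPred_eq, SetLike.ncard_setOf_mem_and, ← Nat.card_coe_set_eq,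
      SetLike.coe_sort_coe, Nat.card_eq_fintype_card, div_le_iff₀ hN,
      Nat.le_floor_iff (by positivity)]
  have hE : MeasurableSet {ω | count ω ≤ k} :=
    measurableSet_le (measurable_card_filter_mem (A := fun g => {ω | T ω ≤ T (act g ω)})
      fun g => measurableSet_le hT (hT.comp (hact g))) measurable_const
  have hrank : ∀ ω, (Finset.univ.filter fun g => act g ω ∈ {ω | count ω ≤ k}).card ≤ k :=
    fun ω => by
      have hcount : ∀ g, count (act g ω)
          = (Finset.univ.filter fun h => T (act g ω) ≤ T (act h ω)).card := fun g => by
        simp only [count, hact_mul]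
        exact card_filter_mul_left (fun h => T (act g ω) ≤ T (act h ω)) g
      simpa only [mem_ofPred_eq, hcount] using card_filter_card_le_le (fun g => T (act g ω)) k
  have key := card_mul_measure_le_of_map_eq hact (fun g => hinv g g.2) hE hrank
  rw [measure_univ, mul_one] at key
  rw [hevent]
  calc μ {ω | count ω ≤ k} ≤ (k : ENNReal) / N :=
        (ENNReal.le_div_iff_mul_le (Or.inl (by positivity)) (by simp)).2 (by rwa [mul_comm])
    _ = ENNReal.ofReal (k / N) := by
        rw [ENNReal.ofReal_div_of_pos hN, ENNReal.ofReal_natCast, ENNReal.ofReal_natCast]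
    _ ≤ ENNReal.ofReal α :=
        ENNReal.ofReal_le_ofReal ((div_le_iff₀ hN).2 (Nat.floor_le (by positivity)))

/-- Validity (super-uniformity) of the permutation p-value: if the law of the
`S`-indexed data vector is invariant under coordinate permutation by every element of a
finite group `G` of permutations of `S`, then for any statistic `T`, the permutation
p-value `𝔓(X) = #{π ∈ G : T(X∘π) ≥ T(X)}/|G|` satisfies `P(𝔓(X) ≤ α) ≤ α`. -/
theorem perm_pvalue_valid (S : Type*) [Fintype S]
    (G : Subgroup (Equiv.Perm S))
    (μ : Measure (S → ℝ)) [IsProbabilityMeasure μ]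
    (hinv : ∀ π ∈ G, Measure.map (fun ω : S → ℝ => fun s => ω (π s)) μ = μ)
    (T : (S → ℝ) → ℝ) (hT : Measurable T)
    (α : ℝ) (hα0 : 0 ≤ α) (hα1 : α ≤ 1) :
    μ {ω | ({π : Equiv.Perm S | π ∈ G ∧ T ω ≤ T (fun s => ω (π s))}.ncard : ℝ) /
            ((G : Set (Equiv.Perm S)).ncard : ℝ) ≤ α}
      ≤ ENNReal.ofReal α :=
  perm_pvalue_valid_general S G μ hinv T hT α hα0
end
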